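/- arXiv:0704.1397 — 2 statements merged into one kernel-verified Lean document; each statement's English description precedes it below -/
import Mathlib

section
/- Let p be an odd prime, d an odd positive integer, and f : ℤ_p → K a continuous function, and let f₁(t) = f(t+1). Then I₋₁(f₁) and I₋₁(f) both exist and I₋₁(f₁) + I₋₁(f) = 2 f(0); that is, lim_{N→∞} Σ_{a=0}^{dp^N−1} (−1)^a (f(a+1) + f(a)) = 2 f(0). -/
/-!
Write `S_N(g)` for the alternating sum of `g` over `[0, d p^N)`. Since `p` and `m = d p^N` are
odd, `S_{N+1}(g) - S_N(g)` regroups as a sum of `±(g(i m + b) - g(b))`, and `i m + b ≡ b` modulo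
`p^N`; uniform continuity of `g` on the compact `ℤ_p` and the ultrametric inequality make this
difference tend to `0`, so `S_N(g)` is Cauchy and converges in the complete field `K`. For the
value, the two sums telescope: `S_N(f₁) + S_N(f) = f(0) + f(d p^N)`, and `d p^N → 0` in `ℤ_p`.
-/

open Filter Finset

theorem Finset.sum_range_mul {M : Type*} [AddCommMonoid M] (h : ℕ → M) (n m : ℕ) :
    ∑ a ∈ range (n * m), h a = ∑ i ∈ range n, ∑ b ∈ range m, h (i * m + b) := by
  induction n with
  | zero => simp
  | succ n ih => rw [Nat.succ_mul, sum_range_add, ih, sum_range_succ]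

section AlternatingSum

variable {R : Type*}

theorem sum_range_neg_one_pow_mul_add_succ [Ring R] (u : ℕ → R) (n : ℕ) :
    ∑ a ∈ range n, (-1 : R) ^ a * (u (a + 1) + u a) = u 0 - (-1) ^ n * u n := by
  induction n with
  | zero => simp
  | succ n ih => rw [sum_range_succ, ih, pow_succ, mul_neg_one, neg_mul, mul_add]; abel

theorem sum_range_mul_sub_sum_range_of_odd [Ring R] (u : ℕ → R) {k m : ℕ}
    (hk : Odd k) (hm : Odd m) :
    ∑ a ∈ range (k * m), (-1 : R) ^ a * u a - ∑ b ∈ range m, (-1 : R) ^ b * u b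
      = ∑ i ∈ range k, ∑ b ∈ range m, (-1 : R) ^ (i * m + b) * (u (i * m + b) - u b) := by
  have hsign (i b : ℕ) : (-1 : R) ^ (i * m + b) = (-1) ^ i * (-1) ^ b := by
    rw [pow_add, pow_mul', hm.neg_one_pow]
  have hblock : ∑ i ∈ range k, ∑ b ∈ range m, (-1 : R) ^ (i * m + b) * u b
      = ∑ b ∈ range m, (-1 : R) ^ b * u b := by
    simp_rw [hsign, mul_assoc, ← mul_sum, ← sum_mul, neg_one_geom_sum,
      if_neg (Nat.not_even_iff_odd.mpr hk), one_mul]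
  simp_rw [mul_sub, sum_sub_distrib, hblock, sum_range_mul]

theorem norm_neg_one_pow_mul [SeminormedRing R] (n : ℕ) (x : R) : ‖(-1 : R) ^ n * x‖ = ‖x‖ := by
  rcases neg_one_pow_eq_or R n with h | h <;> simp [h]

theorem norm_sum_range_mul_sub_sum_range_le [SeminormedRing R] [IsUltrametricDist R]
    (u : ℕ → R) {k m : ℕ} (hk : Odd k) (hm : Odd m) {ε : ℝ} (hε : 0 ≤ ε)
    (hu : ∀ i b, ‖u (i * m + b) - u b‖ ≤ ε) :
    ‖∑ a ∈ range (k * m), (-1 : R) ^ a * u a - ∑ b ∈ range m, (-1 : R) ^ b * u b‖ ≤ ε := by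
  rw [sum_range_mul_sub_sum_range_of_odd u hk hm]
  refine IsUltrametricDist.norm_sum_le_of_forall_le_of_nonneg hε fun i _ => ?_
  refine IsUltrametricDist.norm_sum_le_of_forall_le_of_nonneg hε fun b _ => ?_
  rw [norm_neg_one_pow_mul]
  exact hu i b

end AlternatingSum

namespace PadicInt

variable {p : ℕ} [Fact p.Prime]

theorem tendsto_pow_p_nhds_zero : Tendsto (fun N : ℕ => (p : ℤ_[p]) ^ N) atTop (nhds 0) :=
  tendsto_pow_atTop_nhds_zero_of_norm_lt_one (by simpa using Padic.norm_p_lt_one (p := p))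

theorem eventually_dist_comp_add_pow_p_mul_lt {X : Type*} [PseudoMetricSpace X]
    {g : ℤ_[p] → X} (hg : Continuous g) {ε : ℝ} (hε : 0 < ε) :
    ∀ᶠ N in atTop, ∀ x z : ℤ_[p], dist (g (x + p ^ N * z)) (g x) < ε := by
  obtain ⟨δ, hδ, hgδ⟩ :=
    Metric.uniformContinuous_iff.mp (CompactSpace.uniformContinuous_of_continuous hg) ε hε
  filter_upwards [(tendsto_pow_p_nhds_zero (p := p)).eventually (Metric.ball_mem_nhds 0 hδ)]
    with N hN x z
  refine hgδ ?_
  rw [dist_zero_right] at hN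
  rw [dist_eq_norm, add_sub_cancel_left, norm_mul]
  exact (mul_le_of_le_one_right (norm_nonneg _) (norm_le_one z)).trans_lt hN

end PadicInt

theorem cauchySeq_sum_range_neg_one_pow_mul {p : ℕ} [Fact p.Prime] (hp : Odd p)
    {R : Type*} [SeminormedRing R] [IsUltrametricDist R] {d : ℕ} (hd : Odd d)
    {g : ℤ_[p] → R} (hg : Continuous g) :
    CauchySeq fun N : ℕ => ∑ a ∈ range (d * p ^ N), (-1 : R) ^ a * g (a : ℤ_[p]) := by
  refine NonarchimedeanAddGroup.cauchySeq_of_tendsto_sub_nhds_zero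
    (Metric.tendsto_nhds.mpr fun ε hε => ?_)
  filter_upwards [PadicInt.eventually_dist_comp_add_pow_p_mul_lt hg (half_pos hε)] with N hN
  have hlevel : d * p ^ (N + 1) = p * (d * p ^ N) := by ring
  rw [dist_zero_right, hlevel]
  refine (norm_sum_range_mul_sub_sum_range_le _ hp (hd.mul hp.pow) (half_pos hε).le
    fun i b => ?_).trans_lt (half_lt_self hε)
  have hcast : ((i * (d * p ^ N) + b : ℕ) : ℤ_[p]) = b + p ^ N * (i * d : ℕ) := by
    push_cast; ring
  rw [hcast, ← dist_eq_norm]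
  exact (hN _ _).le

theorem fermionic_integral_shift_one_general
    {p : ℕ} [Fact p.Prime] (hp : Odd p)
    {K : Type*} [NontriviallyNormedField K] [CompleteSpace K] [IsUltrametricDist K]
    {d : ℕ} (hd : Odd d)
    (f : ℤ_[p] → K) (hf : Continuous f) :
    ∃ L₁ L : K,
      Tendsto (fun N : ℕ => ∑ a ∈ Finset.range (d * p ^ N),
          (-1 : K) ^ a * f ((a : ℤ_[p]) + 1)) atTop (nhds L₁) ∧
      Tendsto (fun N : ℕ => ∑ a ∈ Finset.range (d * p ^ N),
          (-1 : K) ^ a * f (a : ℤ_[p])) atTop (nhds L) ∧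
      L₁ + L = 2 * f 0 := by
  obtain ⟨L₁, hL₁⟩ := cauchySeq_tendsto_of_complete
    (cauchySeq_sum_range_neg_one_pow_mul hp hd (g := fun t => f (t + 1)) (by fun_prop))
  obtain ⟨L, hL⟩ := cauchySeq_tendsto_of_complete (cauchySeq_sum_range_neg_one_pow_mul hp hd hf)
  refine ⟨L₁, L, hL₁, hL, tendsto_nhds_unique (hL₁.add hL) ?_⟩
  have htelescope (N : ℕ) :
      ∑ a ∈ range (d * p ^ N), (-1 : K) ^ a * f ((a : ℤ_[p]) + 1)
        + ∑ a ∈ range (d * p ^ N), (-1 : K) ^ a * f (a : ℤ_[p])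
        = f 0 + f ((d * p ^ N : ℕ) : ℤ_[p]) := by
    have := sum_range_neg_one_pow_mul_add_succ (fun a : ℕ => f a) (d * p ^ N)
    simp only [Nat.cast_succ, Nat.cast_zero, (hd.mul hp.pow).neg_one_pow] at this
    rw [← sum_add_distrib]
    simp_rw [← mul_add, this]
    ring
  have hcast : Tendsto (fun N : ℕ => ((d * p ^ N : ℕ) : ℤ_[p])) atTop (nhds 0) := by
    simpa using PadicInt.tendsto_pow_p_nhds_zero.const_mul (d : ℤ_[p])
  simpa [htelescope, two_mul] using ((hf.tendsto 0).comp hcast).const_add (f 0)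

/-- For a continuous `f : ℤ_p → K` and `f₁(t) = f(t+1)`, both fermionic
`p`-adic integrals `I₋₁(f₁)` and `I₋₁(f)` exist and `I₋₁(f₁) + I₋₁(f) = 2 f(0)`. -/
theorem fermionic_integral_shift_one
    {p : ℕ} [Fact p.Prime] (hp : Odd p)
    {K : Type*} [NontriviallyNormedField K] [CompleteSpace K] [IsUltrametricDist K]
    [Algebra ℚ_[p] K] (halg : ∀ x : ℚ_[p], ‖algebraMap ℚ_[p] K x‖ = ‖x‖)
    {d : ℕ} (hd : Odd d) (hdpos : 0 < d)
    (f : ℤ_[p] → K) (hf : Continuous f) :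
    ∃ L₁ L : K,
      Tendsto (fun N : ℕ => ∑ a ∈ Finset.range (d * p ^ N),
          (-1 : K) ^ a * f ((a : ℤ_[p]) + 1)) atTop (nhds L₁) ∧
      Tendsto (fun N : ℕ => ∑ a ∈ Finset.range (d * p ^ N),
          (-1 : K) ^ a * f (a : ℤ_[p])) atTop (nhds L) ∧
      L₁ + L = 2 * f 0 :=
  fermionic_integral_shift_one_general hp hd f hf
end

section
/- Let p be an odd prime, d an odd positive integer, f : ℤ_p → K a continuous function, and n a positive integer; let f_n(t) = f(t+n). Then I₋₁(f_n) and I₋₁(f) exist and satisfy I₋₁(f_n) = (−1)^n I₋₁(f) + 2 Σ_{j=0}^{n−1} (−1)^{n−1−j} f(j). -/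
/-!
For odd `M = d p^N`, the Riemann sums over `M p` and over `M` points differ by
`∑_{i<M} (-1)^i ∑_{j<p} (-1)^j (g(i + M j) - g(i))`, because `∑_{j<p} (-1)^j = 1` for odd `p`.
Since `|M j|_p ≤ p^{-N}`, uniform continuity and the ultrametric inequality make these differences
tend to `0`, so the sums converge. For the shift, reindexing a sum over `M + n` points in two ways
gives the exact identity
`∑_{a<M} (-1)^a g(a+n) = (-1)^n (∑_{a<M} (-1)^a g(a) - ∑_{a<n} (-1)^a (g(a) + g(M+a)))`,
and `M → 0` in `ℤ_p`, so `g(M+a) → g(a)`.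
-/

open Filter Finset Topology

section Alternating

variable {R : Type*} [CommRing R] (F : ℕ → R)

theorem sum_range_mul_eq_sum_sum (M q : ℕ) :
    ∑ a ∈ range (M * q), F a = ∑ j ∈ range q, ∑ i ∈ range M, F (M * j + i) := by
  induction q with
  | zero => simp
  | succ q ih => rw [Nat.mul_succ, sum_range_add, ih, sum_range_succ]

theorem alternating_sum_range_mul_sub {M q : ℕ} (hM : Odd M) (hq : Odd q) :
    ∑ a ∈ range (M * q), (-1) ^ a * F a - ∑ a ∈ range M, (-1) ^ a * F a =
      ∑ i ∈ range M, (-1) ^ i * ∑ j ∈ range q, (-1) ^ j * (F (M * j + i) - F i) := by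
  have hq_sum : ∑ j ∈ range q, (-1 : R) ^ j = 1 := by
    rw [neg_one_geom_sum, if_neg (Nat.not_even_iff_odd.mpr hq)]
  simp only [mul_sub, sum_sub_distrib, ← sum_mul, hq_sum, one_mul, mul_sum]
  rw [sum_range_mul_eq_sum_sum, sum_comm]
  refine congrArg (· - _) (sum_congr rfl fun i _ => sum_congr rfl fun j _ => ?_)
  rw [pow_add, pow_mul, hM.neg_one_pow]
  ring

theorem alternating_sum_range_add {M : ℕ} (hM : Odd M) (n : ℕ) :
    ∑ a ∈ range M, (-1) ^ a * F (a + n) =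
      (-1) ^ n * (∑ a ∈ range M, (-1) ^ a * F a -
        ∑ a ∈ range n, (-1) ^ a * (F a + F (M + a))) := by
  have h₁ := sum_range_add (fun a => (-1 : R) ^ a * F a) n M
  have h₂ := sum_range_add (fun a => (-1 : R) ^ a * F a) M n
  simp only [pow_add, hM.neg_one_pow, add_comm n M, mul_assoc, ← mul_sum] at h₁ h₂
  have hsq : ((-1 : R) ^ n) * (-1) ^ n = 1 := by rw [← mul_pow]; simp
  simp only [mul_add, sum_add_distrib, add_comm _ n]
  linear_combination (-1 : R) ^ n * (h₂ - h₁) - (∑ a ∈ range M, (-1) ^ a * F (n + a)) * hsq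

theorem neg_one_pow_sub_one_sub {R : Type*} [Monoid R] [HasDistribNeg R] {n j : ℕ} (hj : j < n) :
    (-1 : R) ^ (n - 1 - j) = -((-1) ^ n * (-1) ^ j) := by
  obtain ⟨m, rfl⟩ := Nat.exists_eq_add_of_lt hj
  rw [show j + m + 1 - 1 - j = m by omega, ← pow_add, show j + m + 1 + j = m + 1 + 2 * j by ring,
    pow_add _ (m + 1), pow_mul, neg_one_sq, one_pow, mul_one, pow_succ, mul_neg_one, neg_neg]

end Alternating

namespace PadicInt

variable {p : ℕ} [Fact p.Prime]

theorem norm_natCast_mul_pow_le (m k : ℕ) : ‖((m * p ^ k : ℕ) : ℤ_[p])‖ ≤ (p : ℝ)⁻¹ ^ k := by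
  rw [Nat.cast_mul, norm_mul, Nat.cast_pow, norm_p_pow, zpow_neg, zpow_natCast, inv_pow]
  exact mul_le_of_le_one_left (by positivity) (norm_le_one _)

theorem tendsto_inv_prime_pow_atTop : Tendsto (fun k : ℕ => (p : ℝ)⁻¹ ^ k) atTop (𝓝 0) :=
  tendsto_pow_atTop_nhds_zero_of_lt_one (by positivity)
    (inv_lt_one_of_one_lt₀ (by exact_mod_cast (Fact.out : p.Prime).one_lt))

theorem tendsto_natCast_mul_pow_atTop_zero (m : ℕ) :
    Tendsto (fun k : ℕ => ((m * p ^ k : ℕ) : ℤ_[p])) atTop (𝓝 0) :=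
  squeeze_zero_norm (norm_natCast_mul_pow_le m) tendsto_inv_prime_pow_atTop

end PadicInt

section Fermionic

open PadicInt

variable {p : ℕ} [Fact p.Prime] {K : Type*} [NormedField K]

/-- The Riemann sums `∑_{a < d p^N} (-1)^a g(a)` whose limit is the fermionic integral `I₋₁(g)`. -/
noncomputable def fermionicRiemannSum (d : ℕ) (g : ℤ_[p] → K) (N : ℕ) : K :=
  ∑ a ∈ range (d * p ^ N), (-1) ^ a * g a

section Ultrametric

variable [IsUltrametricDist K] {d : ℕ} {g : ℤ_[p] → K}

theorem norm_fermionicRiemannSum_succ_sub_le (hp : Odd p) (hd : Odd d) {k : ℕ} {ε : ℝ}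
    (hε : 0 ≤ ε) (hg : ∀ x y : ℤ_[p], ‖x - y‖ ≤ (p : ℝ)⁻¹ ^ k → ‖g x - g y‖ ≤ ε) :
    ‖fermionicRiemannSum d g (k + 1) - fermionicRiemannSum d g k‖ ≤ ε := by
  have hM : Odd (d * p ^ k) := hd.mul hp.pow
  rw [fermionicRiemannSum, fermionicRiemannSum, pow_succ, ← mul_assoc,
    alternating_sum_range_mul_sub (fun a : ℕ => g a) hM hp]
  refine IsUltrametricDist.norm_sum_le_of_forall_le_of_nonneg hε fun i _ => ?_
  rw [norm_mul, norm_pow, norm_neg, norm_one, one_pow, one_mul]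
  refine IsUltrametricDist.norm_sum_le_of_forall_le_of_nonneg hε fun j _ => ?_
  rw [norm_mul, norm_pow, norm_neg, norm_one, one_pow, one_mul]
  refine hg _ _ ?_
  have : ((d * p ^ k * j + i : ℕ) : ℤ_[p]) - (i : ℕ) = ((d * j * p ^ k : ℕ) : ℤ_[p]) := by
    push_cast; ring
  exact this ▸ norm_natCast_mul_pow_le _ _

theorem tendsto_fermionicRiemannSum_succ_sub (hp : Odd p) (hd : Odd d) (hg : Continuous g) :
    Tendsto (fun k => fermionicRiemannSum d g (k + 1) - fermionicRiemannSum d g k)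
      atTop (𝓝 0) := by
  refine Metric.tendsto_atTop.2 fun ε hε => ?_
  obtain ⟨δ, hδ, hgδ⟩ := Metric.uniformContinuous_iff.1
    (CompactSpace.uniformContinuous_of_continuous hg) (ε / 2) (half_pos hε)
  obtain ⟨k₀, hk₀⟩ :=
    eventually_atTop.1 ((tendsto_inv_prime_pow_atTop (p := p)).eventually (gt_mem_nhds hδ))
  refine ⟨k₀, fun k hk => ?_⟩
  rw [dist_zero_right]
  refine (norm_fermionicRiemannSum_succ_sub_le hp hd (half_pos hε).le fun x y hxy => ?_).trans_lt
    (half_lt_self hε)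
  simpa only [dist_eq_norm] using (hgδ (by rw [dist_eq_norm]; exact hxy.trans_lt (hk₀ k hk))).le

theorem exists_tendsto_fermionicRiemannSum [CompleteSpace K] (hp : Odd p) (hd : Odd d)
    (hg : Continuous g) : ∃ L, Tendsto (fermionicRiemannSum d g) atTop (𝓝 L) :=
  cauchySeq_tendsto_of_complete <|
    NonarchimedeanAddGroup.cauchySeq_of_tendsto_sub_nhds_zero <|
      tendsto_fermionicRiemannSum_succ_sub hp hd hg

end Ultrametric

theorem tendsto_fermionicRiemannSum_shift (hp : Odd p) {d : ℕ} (hd : Odd d) {g : ℤ_[p] → K}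
    (hg : Continuous g) {L : K} (hL : Tendsto (fermionicRiemannSum d g) atTop (𝓝 L)) (n : ℕ) :
    Tendsto (fermionicRiemannSum d fun t => g (t + (n : ℤ_[p]))) atTop
      (𝓝 ((-1) ^ n * (L - 2 * ∑ a ∈ range n, (-1) ^ a * g a))) := by
  have hshift : fermionicRiemannSum d (fun t => g (t + (n : ℤ_[p]))) = fun N =>
      (-1) ^ n * (fermionicRiemannSum d g N -
        ∑ a ∈ range n, (-1) ^ a * (g a + g ((d * p ^ N + a : ℕ) : ℤ_[p]))) := funext fun N => by
    simpa [fermionicRiemannSum] using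
      alternating_sum_range_add (fun a : ℕ => g a) (hd.mul (hp.pow (n := N))) n
  have hboundary (a : ℕ) : Tendsto (fun N => g ((d * p ^ N + a : ℕ) : ℤ_[p])) atTop (𝓝 (g a)) := by
    have := (tendsto_natCast_mul_pow_atTop_zero d).add_const (a : ℤ_[p])
    rw [zero_add] at this
    simpa [Function.comp_def] using (hg.tendsto _).comp this
  simp only [hshift, two_mul, mul_add, sum_add_distrib]
  exact tendsto_const_nhds.mul (hL.sub (tendsto_const_nhds.add (tendsto_finsetSum _ fun a _ =>
    tendsto_const_nhds.mul (hboundary a))))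

end Fermionic

theorem fermionic_integral_shift_general
    {p : ℕ} [Fact p.Prime] (hp : Odd p)
    {K : Type*} [NontriviallyNormedField K] [CompleteSpace K] [IsUltrametricDist K]
    {d : ℕ} (hd : Odd d)
    (f : ℤ_[p] → K) (hf : Continuous f) (n : ℕ) :
    ∃ Ln L : K,
      Tendsto (fun N : ℕ => ∑ a ∈ Finset.range (d * p ^ N),
          (-1 : K) ^ a * f ((a : ℤ_[p]) + (n : ℤ_[p]))) atTop (nhds Ln) ∧
      Tendsto (fun N : ℕ => ∑ a ∈ Finset.range (d * p ^ N),
          (-1 : K) ^ a * f (a : ℤ_[p])) atTop (nhds L) ∧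
      Ln = (-1 : K) ^ n * L +
        2 * ∑ j ∈ Finset.range n, (-1 : K) ^ (n - 1 - j) * f (j : ℤ_[p]) := by
  obtain ⟨L, hL⟩ := exists_tendsto_fermionicRiemannSum hp hd hf
  refine ⟨_, L, tendsto_fermionicRiemannSum_shift hp hd hf hL n, hL, ?_⟩
  rw [mul_sub, mul_left_comm, mul_sum, sub_eq_add_neg, ← mul_neg, ← sum_neg_distrib]
  congr 2
  refine sum_congr rfl fun j hj => ?_
  rw [neg_one_pow_sub_one_sub (mem_range.1 hj)]
  ring

/-- For a continuous `f : ℤ_p → K`, a positive integer `n`, and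
`f_n(t) = f(t+n)`, both fermionic `p`-adic integrals `I₋₁(f_n)` and `I₋₁(f)` exist and
`I₋₁(f_n) = (−1)^n I₋₁(f) + 2 ∑_{j=0}^{n−1} (−1)^{n−1−j} f(j)`. -/
theorem fermionic_integral_shift
    {p : ℕ} [Fact p.Prime] (hp : Odd p)
    {K : Type*} [NontriviallyNormedField K] [CompleteSpace K] [IsUltrametricDist K]
    [Algebra ℚ_[p] K] (halg : ∀ x : ℚ_[p], ‖algebraMap ℚ_[p] K x‖ = ‖x‖)
    {d : ℕ} (hd : Odd d) (hdpos : 0 < d)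
    (f : ℤ_[p] → K) (hf : Continuous f) (n : ℕ) (hn : 0 < n) :
    ∃ Ln L : K,
      Tendsto (fun N : ℕ => ∑ a ∈ Finset.range (d * p ^ N),
          (-1 : K) ^ a * f ((a : ℤ_[p]) + (n : ℤ_[p]))) atTop (nhds Ln) ∧
      Tendsto (fun N : ℕ => ∑ a ∈ Finset.range (d * p ^ N),
          (-1 : K) ^ a * f (a : ℤ_[p])) atTop (nhds L) ∧
      Ln = (-1 : K) ^ n * L +
        2 * ∑ j ∈ Finset.range n, (-1 : K) ^ (n - 1 - j) * f (j : ℤ_[p]) :=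
  fermionic_integral_shift_general hp hd f hf n
end
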